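/- The key identity for the inverse separating operator: det_L[D_{x_i}^{2(L-j)} φ_μ(x_i)] = (-1)^{L(L-1)/2} · a_μ(x_1,...,x_L) / a^{(1)}_μ, where the (i,j) entry is the operator D_{x_i}^{2(L-j)} applied to φ_μ(x_i). -/

import Mathlib

/-- The Euler operator `D_z = z d/dz`. -/
noncomputable def eulerOp (f : ℝ → ℝ) : ℝ → ℝ := fun z => z * deriv f z

/-- `φ_μ(z) = Σ_j (z^{μ_j} - z^{-μ_j})/(μ_j ∏_{i≠j}(μ_j² - μ_i²))`. -/
noncomputable def phiFun {L : ℕ} (μ : Fin L → ℕ) : ℝ → ℝ :=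
  fun z => ∑ j : Fin L,
    (z ^ ((μ j : ℤ)) - z ^ (-(μ j : ℤ))) /
      ((μ j : ℝ) * ∏ i ∈ Finset.univ.erase j, ((μ j : ℝ) ^ 2 - (μ i : ℝ) ^ 2))

/-!
Each application of `D_z` multiplies `z ^ m + s z ^ (-m)` by `m` and flips the sign `s`, so
`D^{2n} φ_μ(z) = Σ_k c_k (μ_k²)^n (z^{μ_k} - z^{-μ_k})`, where `c_k` are the coefficients of `φ_μ`.
Hence the matrix factors as `[x_i^{μ_k} - x_i^{-μ_k}] · diag(c) · [(μ_k²)^{L-1-j}]`, and the last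
factor is a Vandermonde matrix in the `μ_k²` with reversed columns, of determinant
`Q = ∏_{i<j} (μ_i² - μ_j²)`. Splitting `∏_k ∏_{i≠k} (μ_k² - μ_i²)` into the pairs `k < i` and
`k > i` gives `(-1)^{L(L-1)/2} Q²`, so `∏ c_k = ((-1)^{L(L-1)/2} ∏ μ_k · Q²)⁻¹` and the sign and
one factor `Q` survive.
-/

open Finset

lemma hasDerivAt_zpow_add_mul_zpow_neg (m : ℕ) (s : ℝ) {z : ℝ} (hz : z ≠ 0) :
    HasDerivAt (fun z : ℝ => z ^ (m : ℤ) + s * z ^ (-(m : ℤ)))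
      (m * (z ^ (m : ℤ) - s * z ^ (-(m : ℤ))) / z) z := by
  refine ((hasDerivAt_zpow (m : ℤ) z (.inl hz)).add
    ((hasDerivAt_zpow (-(m : ℤ)) z (.inl hz)).const_mul s)).congr_deriv ?_
  rw [zpow_sub_one₀ hz, zpow_sub_one₀ hz]
  push_cast
  ring

section EulerIterate

variable {ι : Type*} [Fintype ι] (a : ι → ℝ) (m : ι → ℕ)

noncomputable def eulerIterate (k : ℕ) : ℝ → ℝ := fun z =>
  ∑ j, a j * (m j : ℝ) ^ k * (z ^ (m j : ℤ) + (-1) ^ (k + 1) * z ^ (-(m j : ℤ)))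

/-- For `m_j ≠ 0` both powers vanish at `0` (recall `0⁻¹ = 0`); for `m_j = 0` the factor
`m_j ^ (k + 1)` does. -/
lemma eulerIterate_succ_apply_zero (k : ℕ) : eulerIterate a m (k + 1) 0 = 0 := by
  refine sum_eq_zero fun j _ => ?_
  rcases eq_or_ne (m j) 0 with hm | hm
  · simp [hm]
  · have hm' : (m j : ℤ) ≠ 0 := Int.natCast_ne_zero.2 hm
    simp [zero_zpow _ hm', zero_zpow _ (neg_ne_zero.2 hm')]

lemma eulerOp_eulerIterate (k : ℕ) : eulerOp (eulerIterate a m k) = eulerIterate a m (k + 1) := by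
  funext z
  rcases eq_or_ne z 0 with rfl | hz
  · simp [eulerOp, eulerIterate_succ_apply_zero]
  have hderiv : HasDerivAt (eulerIterate a m k) _ z := HasDerivAt.fun_sum fun j _ =>
    (hasDerivAt_zpow_add_mul_zpow_neg (m j) ((-1) ^ (k + 1)) hz).const_mul (a j * (m j : ℝ) ^ k)
  rw [eulerOp, hderiv.deriv, mul_sum]
  refine sum_congr rfl fun j _ => ?_
  field_simp
  ring

lemma iterate_eulerOp_eulerIterate_zero (k : ℕ) :
    eulerOp^[k] (eulerIterate a m 0) = eulerIterate a m k := by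
  induction k with
  | zero => rfl
  | succ k ih => rw [Function.iterate_succ_apply', ih, eulerOp_eulerIterate]

lemma eulerIterate_two_mul (n : ℕ) (z : ℝ) :
    eulerIterate a m (2 * n) z =
      ∑ j, (z ^ (m j : ℤ) - z ^ (-(m j : ℤ))) * (a j * ((m j : ℝ) ^ 2) ^ n) := by
  refine sum_congr rfl fun j _ => ?_
  rw [pow_succ, (even_two_mul n).neg_one_pow, pow_mul]
  ring

end EulerIterate

section PairProducts

variable {ι M R : Type*} [Fintype ι] [LinearOrder ι]

lemma prod_filter_fst_lt_snd [CommMonoid M] (f : ι → ι → M) :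
    ∏ p ∈ univ.filter (fun p : ι × ι => p.1 < p.2), f p.1 p.2 =
      ∏ i, ∏ j ∈ univ.filter (i < ·), f i j := by
  rw [prod_filter, ← univ_product_univ, prod_product]
  simp [prod_ite]

lemma prod_prod_erase_sub [CommRing R] (w : ι → R) :
    ∏ k, ∏ i ∈ univ.erase k, (w k - w i) =
      (-1) ^ (Fintype.card ι).choose 2 *
        (∏ p ∈ univ.filter (fun p : ι × ι => p.1 < p.2), (w p.1 - w p.2)) ^ 2 := by
  have hsplit : ∀ k, ∏ i ∈ univ.erase k, (w k - w i) =
      (∏ i ∈ univ.filter (k < ·), (w k - w i)) * ∏ i ∈ univ.filter (· < k), (w k - w i) := by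
    intro k
    rw [← prod_union (disjoint_filter.2 fun i _ hki hik => lt_asymm hki hik)]
    congr 1
    ext i
    simp [eq_comm]
  have hswap : ∏ k, ∏ i ∈ univ.filter (· < k), (w k - w i) =
      ∏ i, ∏ k ∈ univ.filter (i < ·), -(w i - w k) := by
    rw [prod_comm' (t' := univ) (s' := fun i => univ.filter (i < ·))] <;> simp
  rw [prod_congr rfl fun k _ => hsplit k, prod_mul_distrib, hswap, ← prod_filter_fst_lt_snd,
    ← prod_filter_fst_lt_snd, prod_neg, Fintype.card_product_filter_lt]
  ring

lemma det_of_pow_rev [CommRing R] {n : ℕ} (w : Fin n → R) :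
    (Matrix.of fun i j : Fin n => w i ^ (n - 1 - (j : ℕ))).det =
      ∏ p ∈ univ.filter (fun p : Fin n × Fin n => p.1 < p.2), (w p.1 - w p.2) := by
  have hV : Matrix.of (fun i j : Fin n => w i ^ (n - 1 - (j : ℕ))) =
      Matrix.projVandermonde 1 w := by
    ext i j
    simp only [Matrix.of_apply, Matrix.projVandermonde_apply, Pi.one_apply, one_pow, one_mul,
      Fin.val_rev]
    congr 1
    omega
  simp [hV, Matrix.det_projVandermonde, prod_filter_fst_lt_snd (fun i j => w i - w j),
    filter_lt_eq_Ioi]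

end PairProducts

section Phi

variable {L : ℕ} (μ : Fin L → ℕ)

noncomputable def phiCoeff (j : Fin L) : ℝ :=
  ((μ j : ℝ) * ∏ i ∈ univ.erase j, ((μ j : ℝ) ^ 2 - (μ i : ℝ) ^ 2))⁻¹

lemma phiFun_eq_eulerIterate : phiFun μ = eulerIterate (phiCoeff μ) μ 0 := by
  funext z
  refine sum_congr rfl fun j _ => ?_
  rw [phiCoeff, div_eq_mul_inv]
  ring

lemma prod_phiCoeff :
    ∏ j, phiCoeff μ j = ((∏ j, (μ j : ℝ)) * ((-1) ^ (L * (L - 1) / 2) *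
      (∏ p ∈ univ.filter (fun p : Fin L × Fin L => p.1 < p.2),
        ((μ p.1 : ℝ) ^ 2 - (μ p.2 : ℝ) ^ 2)) ^ 2))⁻¹ := by
  simp only [phiCoeff, prod_inv_distrib, prod_mul_distrib,
    prod_prod_erase_sub (fun j => (μ j : ℝ) ^ 2), Fintype.card_fin, Nat.choose_two_right]

lemma iterate_eulerOp_phiFun_two_mul (n : ℕ) (z : ℝ) :
    eulerOp^[2 * n] (phiFun μ) z =
      ∑ k, (z ^ (μ k : ℤ) - z ^ (-(μ k : ℤ))) * (phiCoeff μ k * ((μ k : ℝ) ^ 2) ^ n) := by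
  rw [phiFun_eq_eulerIterate, iterate_eulerOp_eulerIterate_zero, eulerIterate_two_mul]

end Phi

lemma mul_inv_mul_sq_mul_of_mul_self_eq_one {K : Type*} [Field K] {s : K} (hs : s * s = 1)
    (a p q : K) : a * ((p * (s * q ^ 2))⁻¹ * q) = s * a / (p * q) := by
  rcases eq_or_ne q 0 with rfl | hq
  · simp
  rcases eq_or_ne p 0 with rfl | hp
  · simp
  have : s ≠ 0 := left_ne_zero_of_mul_eq_one hs
  field_simp
  linear_combination (-a) * hs

theorem inverse_separating_identity_general (L : ℕ) (μ : Fin L → ℕ) (x : Fin L → ℝ) :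
    Matrix.det (Matrix.of fun i j : Fin L =>
        (eulerOp^[2 * (L - 1 - (j : ℕ))] (phiFun μ)) (x i)) =
      (-1 : ℝ) ^ (L * (L - 1) / 2) *
        Matrix.det (Matrix.of fun i j : Fin L =>
          x i ^ ((μ j : ℤ)) - x i ^ (-(μ j : ℤ))) /
        ((∏ i : Fin L, (μ i : ℝ)) *
          ∏ p ∈ Finset.univ.filter (fun p : Fin L × Fin L => p.1 < p.2),
            ((μ p.1 : ℝ) ^ 2 - (μ p.2 : ℝ) ^ 2)) := by
  set V := Matrix.of fun k j : Fin L => ((μ k : ℝ) ^ 2) ^ (L - 1 - (j : ℕ))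
  have hfactor :
      Matrix.of (fun i j : Fin L => eulerOp^[2 * (L - 1 - (j : ℕ))] (phiFun μ) (x i)) =
      (Matrix.of fun i j : Fin L => x i ^ ((μ j : ℤ)) - x i ^ (-(μ j : ℤ))) *
        Matrix.of fun k j => phiCoeff μ k * V k j := by
    ext i j
    rw [Matrix.mul_apply]
    exact iterate_eulerOp_phiFun_two_mul μ _ _
  rw [hfactor, Matrix.det_mul, Matrix.det_mul_column, prod_phiCoeff, det_of_pow_rev]
  refine mul_inv_mul_sq_mul_of_mul_self_eq_one ?_ _ _ _
  rw [← pow_add]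
  exact Even.neg_one_pow ⟨_, rfl⟩

/-- Key identity for the inverse separating operator:
`det[D_{x_i}^{2(L-j)} φ_μ(x_i)] = (-1)^{L(L-1)/2} a_μ(x) / a^{(1)}_μ`. -/
theorem inverse_separating_identity (L : ℕ) (μ : Fin L → ℕ)
    (hpos : ∀ i, 0 < μ i) (hanti : ∀ i j : Fin L, i < j → μ j < μ i)
    (x : Fin L → ℝ) (hx : ∀ i, x i ≠ 0) :
    Matrix.det (Matrix.of fun i j : Fin L =>
        (eulerOp^[2 * (L - 1 - (j : ℕ))] (phiFun μ)) (x i)) =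
      (-1 : ℝ) ^ (L * (L - 1) / 2) *
        Matrix.det (Matrix.of fun i j : Fin L =>
          x i ^ ((μ j : ℤ)) - x i ^ (-(μ j : ℤ))) /
        ((∏ i : Fin L, (μ i : ℝ)) *
          ∏ p ∈ Finset.univ.filter (fun p : Fin L × Fin L => p.1 < p.2),
            ((μ p.1 : ℝ) ^ 2 - (μ p.2 : ℝ) ^ 2)) :=
  inverse_separating_identity_general L μ x
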